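/- arXiv:1910.08239 — 5 statements merged into one kernel-verified Lean document; each statement's English description precedes it below -/
import Mathlib

section
/- Under the hypotheses of the deterministic continuous consensus model (weights summing to one, independent of target index), the diameter $\mathcal{D}(\mathcal{X}_t) := \max_{1 \le i,j \le N} |X^i_t - X^j_t|$ decays exponentially: $\mathcal{D}(\mathcal{X}_t) \le e^{-\lambda t} \mathcal{D}(\mathcal{X}_0)$ for all $t \ge 0$. -/
/-!
Since the weights `ψᵏ_t` do not depend on the target index and sum to one, subtracting the
equations for `Xⁱ` and `Xʲ` gives `d/dt (Xⁱ - Xʲ) = -λ (Xⁱ - Xʲ)`. Hence every pairwise difference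
is exactly `e^{-λt}` times its initial value, and so is the diameter.
-/

open Real

section ExpDecay

variable {E : Type*} [NormedAddCommGroup E] [NormedSpace ℝ E]

theorem eq_exp_neg_mul_smul_of_hasDerivAt {c : ℝ} {f : ℝ → E}
    (hf : ∀ s ≥ (0 : ℝ), HasDerivAt f (-c • f s) s) {t : ℝ} (ht : 0 ≤ t) :
    f t = exp (-c * t) • f 0 := by
  set g : ℝ → E := fun s => exp (c * s) • f s with hg
  have hg_deriv : ∀ s ≥ (0 : ℝ), HasDerivAt g 0 s := by
    intro s hs
    have hexp : HasDerivAt (fun s => exp (c * s)) (exp (c * s) * c) s := by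
      simpa using ((hasDerivAt_id s).const_mul c).exp
    refine (hexp.smul (hf s hs)).congr_deriv ?_
    rw [smul_smul, ← add_smul, mul_neg, neg_add_cancel, zero_smul]
  have hconst : g t = g 0 :=
    constant_of_has_deriv_right_zero
      (fun x hx => (hg_deriv x hx.1).continuousAt.continuousWithinAt)
      (fun x hx => (hg_deriv x hx.1).hasDerivWithinAt) t ⟨ht, le_rfl⟩
  simp only [hg, mul_zero, exp_zero, one_smul] at hconst
  rw [← hconst, smul_smul, ← exp_add]
  simp

end ExpDecay

section Consensus

variable {E : Type*} [NormedAddCommGroup E] [NormedSpace ℝ E] {ι : Type*} [Fintype ι]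

theorem consensus_sub_eq {ψ : ι → ℝ} (hψ : ∑ k, ψ k = 1) (x : ι → E) (i j : ι) :
    ∑ k, ψ k • (x k - x i) - ∑ k, ψ k • (x k - x j) = -(x i - x j) := by
  rw [← Finset.sum_sub_distrib]
  simp_rw [← smul_sub, sub_sub_sub_cancel_left, ← Finset.sum_smul, hψ, one_smul]
  abel

theorem norm_sub_consensus_eq {lam : ℝ} {ψ : ℝ → ι → ℝ} (hψ : ∀ t ≥ (0 : ℝ), ∑ k, ψ t k = 1)
    {X : ι → ℝ → E}
    (hX : ∀ i, ∀ t ≥ (0 : ℝ), HasDerivAt (X i) (lam • ∑ k, ψ t k • (X k t - X i t)) t)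
    (i j : ι) {t : ℝ} (ht : 0 ≤ t) :
    ‖X i t - X j t‖ = exp (-lam * t) * ‖X i 0 - X j 0‖ := by
  have hdiff : ∀ s ≥ (0 : ℝ),
      HasDerivAt (fun s => X i s - X j s) (-lam • (X i s - X j s)) s := by
    intro s hs
    refine ((hX i s hs).sub (hX j s hs)).congr_deriv ?_
    rw [← smul_sub, consensus_sub_eq (hψ s hs), smul_neg, neg_smul]
  rw [eq_exp_neg_mul_smul_of_hasDerivAt hdiff ht, norm_smul, norm_of_nonneg (exp_nonneg _)]

end Consensus

theorem stmt_1_general (N d : ℕ) (lam : ℝ)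
    (psi : ℝ → Fin N → ℝ)
    (hpsi_sum : ∀ t ≥ (0 : ℝ), ∑ k, psi t k = 1)
    (X : Fin N → ℝ → EuclideanSpace ℝ (Fin d))
    (hODE : ∀ i, ∀ t ≥ (0 : ℝ),
      HasDerivAt (X i) (lam • ∑ k, psi t k • (X k t - X i t)) t) :
    ∀ t ≥ (0 : ℝ),
      (⨆ i, ⨆ j, ‖X i t - X j t‖) ≤
        Real.exp (-lam * t) * ⨆ i, ⨆ j, ‖X i 0 - X j 0‖ := by
  intro t ht
  simp_rw [norm_sub_consensus_eq hpsi_sum hODE _ _ ht, Real.mul_iSup_of_nonneg (exp_nonneg _)]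
  exact le_rfl

theorem stmt_1 (N d : ℕ) (hN : 0 < N) (lam : ℝ) (hlam : 0 < lam)
    (psi : ℝ → Fin N → ℝ)
    (hpsi_nonneg : ∀ t ≥ (0 : ℝ), ∀ k, 0 ≤ psi t k)
    (hpsi_sum : ∀ t ≥ (0 : ℝ), ∑ k, psi t k = 1)
    (X : Fin N → ℝ → EuclideanSpace ℝ (Fin d))
    (hODE : ∀ i, ∀ t ≥ (0 : ℝ),
      HasDerivAt (X i) (lam • ∑ k, psi t k • (X k t - X i t)) t) :
    ∀ t ≥ (0 : ℝ),
      (⨆ i, ⨆ j, ‖X i t - X j t‖) ≤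
        Real.exp (-lam * t) * ⨆ i, ⨆ j, ‖X i 0 - X j 0‖ :=
  stmt_1_general N d lam psi hpsi_sum X hODE
end

section
/- Let $X^1,\dots,X^N$ solve the deterministic continuous consensus ODE with $\lambda > 0$ and weights summing to one. Then there exists a point $X_\infty \in \mathbb{R}^d$, independent of $i$, such that $\lim_{t \to \infty} X^i_t = X_\infty$ for every $i = 1,\dots,N$. -/
/-!
Since the weights sum to one, every difference `X k - X i` solves `D' = -λ D`, so
`X k t - X i t = exp (-λ t) • (X k 0 - X i 0)`: the configuration contracts exponentially.
Consequently each velocity is `O(exp (-λ t))`, which by the mean value inequality makes `X i`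
Cauchy at infinity; and the vanishing differences force all limits to coincide.
-/

open Real Filter Topology

theorem CauchySeq.of_dist_le_dist {α β γ : Type*} [PseudoMetricSpace α] [PseudoMetricSpace β]
    [LinearOrder γ] [Nonempty γ] {f : γ → α} {g : γ → β} {a : γ}
    (h : ∀ t s, a ≤ t → t ≤ s → dist (f s) (f t) ≤ dist (g s) (g t)) (hg : CauchySeq g) :
    CauchySeq f := by
  rw [Metric.cauchySeq_iff] at hg ⊢
  intro ε hε
  obtain ⟨N, hN⟩ := hg ε hε
  refine ⟨max N a, fun m hm n hn => ?_⟩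
  rcases le_total m n with hmn | hnm
  · rw [dist_comm]
    exact (h m n (le_of_max_le_right hm) hmn).trans_lt
      (hN n (le_of_max_le_left hn) m (le_of_max_le_left hm))
  · exact (h n m (le_of_max_le_right hn) hnm).trans_lt
      (hN m (le_of_max_le_left hm) n (le_of_max_le_left hn))

theorem tendsto_exp_neg_mul_atTop_nhds_zero {lam : ℝ} (hlam : 0 < lam) :
    Tendsto (fun t => exp (-lam * t)) atTop (𝓝 0) :=
  tendsto_exp_comp_nhds_zero.mpr (tendsto_id.const_mul_atTop_of_neg (neg_neg_of_pos hlam))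

theorem Finset.sum_smul_sub_sub_sum_smul_sub {ι R M : Type*} [Fintype ι] [Ring R]
    [AddCommGroup M] [Module R M] {ψ : ι → R} (hψ : ∑ k, ψ k = 1) (x : ι → M) (i j : ι) :
    ∑ k, ψ k • (x k - x j) - ∑ k, ψ k • (x k - x i) = -(x j - x i) := by
  simp only [smul_sub, Finset.sum_sub_distrib, ← Finset.sum_smul, hψ, one_smul]
  abel

section

variable {E : Type*} [NormedAddCommGroup E] [NormedSpace ℝ E]

theorem eq_exp_mul_smul_of_hasDerivAt_smul_self {D : ℝ → E} {c : ℝ}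
    (hD : ∀ t ≥ (0 : ℝ), HasDerivAt D (c • D t) t) {t : ℝ} (ht : 0 ≤ t) :
    D t = exp (c * t) • D 0 := by
  have hderiv : ∀ u ≥ (0 : ℝ), HasDerivAt (fun u => exp (-(c * u)) • D u) 0 u := by
    intro u hu
    have hexp : HasDerivAt (fun u => exp (-(c * u))) (-c * exp (-(c * u))) u := by
      simpa [mul_comm] using ((hasDerivAt_id u).const_mul c).neg.exp
    refine (hexp.smul (hD u hu)).congr_deriv ?_
    module
  have hconst := constant_of_has_deriv_right_zero
    (fun u hu => (hderiv u hu.1).continuousAt.continuousWithinAt)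
    (fun u hu => (hderiv u hu.1).hasDerivWithinAt) t ⟨ht, le_rfl⟩
  simp only [mul_zero, neg_zero, exp_zero, one_smul] at hconst
  rw [← hconst, smul_smul, ← exp_add, add_neg_cancel, exp_zero, one_smul]

theorem norm_sub_le_sub_of_norm_hasDerivAt_le {f f' : ℝ → E} {B B' : ℝ → ℝ} {a : ℝ}
    (hf : ∀ u ≥ a, HasDerivAt f (f' u) u) (hB : ∀ u ≥ a, HasDerivAt B (B' u) u)
    (bound : ∀ u ≥ a, ‖f' u‖ ≤ B' u) {t s : ℝ} (ht : a ≤ t) (hts : t ≤ s) :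
    ‖f s - f t‖ ≤ B s - B t :=
  image_norm_le_of_norm_deriv_right_le_deriv_boundary' (f := fun u => f u - f t)
    (B := fun u => B u - B t)
    (fun u hu => ((hf u (ht.trans hu.1)).sub_const _).continuousAt.continuousWithinAt)
    (fun u hu => ((hf u (ht.trans hu.1)).sub_const _).hasDerivWithinAt) (by simp)
    (fun u hu => ((hB u (ht.trans hu.1)).sub_const _).continuousAt.continuousWithinAt)
    (fun u hu => ((hB u (ht.trans hu.1)).sub_const _).hasDerivWithinAt)
    (fun u hu => bound u (ht.trans hu.1)) ⟨hts, le_rfl⟩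

theorem exists_tendsto_of_norm_hasDerivAt_le [CompleteSpace E] {f f' : ℝ → E} {B B' : ℝ → ℝ}
    {a b : ℝ}
    (hf : ∀ u ≥ a, HasDerivAt f (f' u) u) (hB : ∀ u ≥ a, HasDerivAt B (B' u) u)
    (bound : ∀ u ≥ a, ‖f' u‖ ≤ B' u) (hBb : Tendsto B atTop (𝓝 b)) :
    ∃ L, Tendsto f atTop (𝓝 L) :=
  cauchySeq_tendsto_of_complete <| hBb.cauchySeq.of_dist_le_dist fun t s ht hts => by
    rw [dist_eq_norm, Real.dist_eq]
    exact (norm_sub_le_sub_of_norm_hasDerivAt_le hf hB bound ht hts).trans (le_abs_self _)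

theorem exists_tendsto_of_norm_hasDerivAt_le_exp [CompleteSpace E] {f f' : ℝ → E} {a C lam : ℝ}
    (hlam : 0 < lam)
    (hf : ∀ u ≥ a, HasDerivAt f (f' u) u) (bound : ∀ u ≥ a, ‖f' u‖ ≤ C * exp (-lam * u)) :
    ∃ L, Tendsto f atTop (𝓝 L) := by
  refine exists_tendsto_of_norm_hasDerivAt_le (B := fun u => -(C / lam) * exp (-lam * u))
    (b := -(C / lam) * 0) hf (fun u _ => ?_) bound ?_
  · refine ((((hasDerivAt_id' u).const_mul (-lam)).exp).const_mul (-(C / lam))).congr_deriv ?_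
    field_simp
  · exact (tendsto_exp_neg_mul_atTop_nhds_zero hlam).const_mul _

theorem norm_sum_smul_le_sum_norm {ι : Type*} [Fintype ι] {ψ : ι → ℝ} (hψ0 : ∀ k, 0 ≤ ψ k)
    (hψ1 : ∑ k, ψ k = 1) (v : ι → E) :
    ‖∑ k, ψ k • v k‖ ≤ ∑ k, ‖v k‖ := by
  refine (norm_sum_le _ _).trans (Finset.sum_le_sum fun k _ => ?_)
  rw [norm_smul, Real.norm_of_nonneg (hψ0 k)]
  have hψk : ψ k ≤ 1 := hψ1 ▸ Finset.single_le_sum (fun m _ => hψ0 m) (Finset.mem_univ k)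
  exact mul_le_of_le_one_left (norm_nonneg _) hψk

end

theorem stmt_2 (N d : ℕ) (hN : 0 < N) (lam : ℝ) (hlam : 0 < lam)
    (psi : ℝ → Fin N → ℝ)
    (hpsi_nonneg : ∀ t ≥ (0 : ℝ), ∀ k, 0 ≤ psi t k)
    (hpsi_sum : ∀ t ≥ (0 : ℝ), ∑ k, psi t k = 1)
    (X : Fin N → ℝ → EuclideanSpace ℝ (Fin d))
    (hODE : ∀ i, ∀ t ≥ (0 : ℝ),
      HasDerivAt (X i) (lam • ∑ k, psi t k • (X k t - X i t)) t) :
    ∃ Xinf : EuclideanSpace ℝ (Fin d),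
      ∀ i, Tendsto (X i) atTop (nhds Xinf) := by
  have hdiff : ∀ i k, ∀ t ≥ (0 : ℝ), X k t - X i t = exp (-lam * t) • (X k 0 - X i 0) :=
    fun i k t ht => eq_exp_mul_smul_of_hasDerivAt_smul_self (fun u hu =>
      ((hODE k u hu).sub (hODE i u hu)).congr_deriv <| by
        rw [← smul_sub, Finset.sum_smul_sub_sub_sum_smul_sub (hpsi_sum u hu), smul_neg,
          neg_smul, Pi.sub_apply]) ht
  let i₀ : Fin N := ⟨0, hN⟩
  obtain ⟨L, hL⟩ := exists_tendsto_of_norm_hasDerivAt_le_exp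
    (C := lam * ∑ k, ‖X k 0 - X i₀ 0‖) hlam (hODE i₀) fun t ht => by
      simp only [hdiff i₀ _ t ht, smul_comm (psi t _) (exp (-lam * t)), ← Finset.smul_sum,
        norm_smul, Real.norm_of_nonneg hlam.le, Real.norm_of_nonneg (exp_pos _).le]
      rw [mul_comm (exp _), mul_assoc]
      gcongr
      exact norm_sum_smul_le_sum_norm (hpsi_nonneg t ht) (hpsi_sum t ht) _
  refine ⟨L, fun i => ?_⟩
  have hlim := hL.add ((tendsto_exp_neg_mul_atTop_nhds_zero hlam).smul_const (X i 0 - X i₀ 0))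
  rw [zero_smul, add_zero] at hlim
  exact hlim.congr' <| (eventually_ge_atTop 0).mono fun t ht => by
    rw [← hdiff i₀ i t ht, add_sub_cancel]
end

section
/- Suppose $\lambda > 0$ and $0 < h < 1/\lambda$. Then for the deterministic discrete consensus model the diameter $\mathcal{D}(\mathcal{X}_n) := \max_{i,j} |X^i_n - X^j_n|$ satisfies $\mathcal{D}(\mathcal{X}_n) \le e^{-\lambda h n} \mathcal{D}(\mathcal{X}_0)$ for all $n \ge 0$. -/
theorem stmt_6 (N d : ℕ) (hN : 0 < N) (lam h : ℝ) (hlam : 0 < lam)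
    (hh : 0 < h) (hh' : h < 1 / lam)
    (psi : ℕ → Fin N → ℝ)
    (hpsi_nonneg : ∀ n k, 0 ≤ psi n k)
    (hpsi_sum : ∀ n, ∑ k, psi n k = 1)
    (X : ℕ → Fin N → EuclideanSpace ℝ (Fin d))
    (hrec : ∀ n i,
      X (n + 1) i = X n i + (lam * h) • ∑ k, psi n k • (X n k - X n i)) :
    ∀ n : ℕ,
      (⨆ i, ⨆ j, ‖X n i - X n j‖) ≤
        Real.exp (-(lam * h * n)) * ⨆ i, ⨆ j, ‖X 0 i - X 0 j‖ := by
  haveI : Nonempty (Fin N) := Fin.pos_iff_nonempty.mp hN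
  have hlh : 0 < lam * h := mul_pos hlam hh
  have h1 : 0 ≤ 1 - lam * h := by
    have : lam * h < 1 := by
      have := (lt_div_iff₀ hlam).mp hh'
      linarith [this]
    linarith
  have h2 : 1 - lam * h ≤ Real.exp (-(lam * h)) := by
    have := Real.add_one_le_exp (-(lam * h))
    linarith
  -- key identity
  have key : ∀ n i j, X n i - X n j = ((1 - lam * h) ^ n) • (X 0 i - X 0 j) := by
    intro n
    induction n with
    | zero => intro i j; simp
    | succ n ih =>
      intro i j
      have hsum : ∀ i : Fin N, (∑ k, psi n k • (X n k - X n i))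
          = (∑ k, psi n k • X n k) - X n i := by
        intro i
        simp [smul_sub, Finset.sum_sub_distrib, ← Finset.sum_smul, hpsi_sum n]
      have : X (n + 1) i - X (n + 1) j = (1 - lam * h) • (X n i - X n j) := by
        rw [hrec n i, hrec n j, hsum i, hsum j]
        module
      rw [this, ih i j, smul_smul, pow_succ]
      ring_nf
  intro n
  have hbound : ∀ i j : Fin N, ‖X n i - X n j‖ ≤
      Real.exp (-(lam * h * n)) * ⨆ i, ⨆ j, ‖X 0 i - X 0 j‖ := by
    intro i j
    rw [key n i j, norm_smul]
    have hpow : ‖(1 - lam * h) ^ n‖ ≤ Real.exp (-(lam * h * n)) := by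
      rw [Real.norm_eq_abs, abs_of_nonneg (pow_nonneg h1 n)]
      calc (1 - lam * h) ^ n ≤ (Real.exp (-(lam * h))) ^ n :=
            pow_le_pow_left₀ h1 h2 n
        _ = Real.exp (-(lam * h * n)) := by
            rw [← Real.exp_nat_mul]; ring_nf
    have hsup : ‖X 0 i - X 0 j‖ ≤ ⨆ i, ⨆ j, ‖X 0 i - X 0 j‖ := by
      have h1' : ‖X 0 i - X 0 j‖ ≤ ⨆ j, ‖X 0 i - X 0 j‖ :=
        le_ciSup (f := fun j => ‖X 0 i - X 0 j‖) (Set.Finite.bddAbove (Set.finite_range _)) j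
      exact h1'.trans (le_ciSup (f := fun i => ⨆ j, ‖X 0 i - X 0 j‖) (Set.Finite.bddAbove (Set.finite_range _)) i)
    exact mul_le_mul hpow hsup (norm_nonneg _) (Real.exp_pos _).le
  exact ciSup_le fun i => ciSup_le fun j => hbound i j
end

section
/- Under the hypotheses $\lambda > 0$, $0 < h < 1/\lambda$, the deterministic discrete consensus model converges: there exists $X_\infty \in \mathbb{R}^d$ (independent of $i$) such that $\lim_{n \to \infty} X^i_n = X_\infty$ for every $i$. -/
open Filter

theorem stmt_7 (N d : ℕ) (hN : 0 < N) (lam h : ℝ) (hlam : 0 < lam)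
    (hh : 0 < h) (hh' : h < 1 / lam)
    (psi : ℕ → Fin N → ℝ)
    (hpsi_nonneg : ∀ n k, 0 ≤ psi n k)
    (hpsi_sum : ∀ n, ∑ k, psi n k = 1)
    (X : ℕ → Fin N → EuclideanSpace ℝ (Fin d))
    (hrec : ∀ n i,
      X (n + 1) i = X n i + (lam * h) • ∑ k, psi n k • (X n k - X n i)) :
    ∃ Xinf : EuclideanSpace ℝ (Fin d),
      ∀ i, Tendsto (fun n => X n i) atTop (nhds Xinf) := by
  have hlh0 : 0 < lam * h := mul_pos hlam hh
  have hlh1 : lam * h < 1 := by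
    have := (lt_div_iff₀ hlam).mp hh'
    linarith
  set r : ℝ := 1 - lam * h with hr_def
  have hr0 : 0 < r := by simp [hr_def]; linarith
  have hr1 : r < 1 := by simp [hr_def]; linarith
  have hpsi_le1 : ∀ n k, psi n k ≤ 1 := by
    intro n k
    have := Finset.single_le_sum (f := psi n) (fun j _ => hpsi_nonneg n j)
      (Finset.mem_univ k)
    rw [hpsi_sum n] at this
    exact this
  -- rewrite recursion
  have step : ∀ n i, X (n + 1) i = r • X n i + (lam * h) • ∑ k, psi n k • X n k := by
    intro n i
    have hsum : ∑ k, psi n k • (X n k - X n i)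
        = (∑ k, psi n k • X n k) - X n i := by
      simp_rw [smul_sub]
      rw [Finset.sum_sub_distrib, ← Finset.sum_smul, hpsi_sum n, one_smul]
    rw [hrec, hsum]
    rw [hr_def, sub_smul, one_smul, smul_sub]
    abel
  -- differences shrink geometrically
  have diff : ∀ n i j, X n i - X n j = r ^ n • (X 0 i - X 0 j) := by
    intro n
    induction n with
    | zero => intro i j; simp
    | succ n ih =>
      intro i j
      rw [step, step]
      have : r • X n i + (lam * h) • ∑ k, psi n k • X n k
          - (r • X n j + (lam * h) • ∑ k, psi n k • X n k)
          = r • (X n i - X n j) := by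
        rw [smul_sub]; abel
      rw [this, ih i j, pow_succ, smul_smul, mul_comm]
  set i0 : Fin N := ⟨0, hN⟩
  set C : ℝ := (lam * h) * ∑ k, ‖X 0 k - X 0 i0‖ with hC_def
  have hincr : ∀ n, dist (X n i0) (X (n + 1) i0) ≤ C * r ^ n := by
    intro n
    have key : X (n + 1) i0 - X n i0
        = ((lam * h) * r ^ n) • ∑ k, psi n k • (X 0 k - X 0 i0) := by
      rw [step]
      have h1 : r • X n i0 + (lam * h) • (∑ k, psi n k • X n k) - X n i0
          = (lam * h) • ((∑ k, psi n k • X n k) - X n i0) := by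
        rw [hr_def, sub_smul, one_smul, smul_sub]; abel
      rw [h1]
      have h2 : ∑ k, psi n k • (X n k - X n i0)
          = (∑ k, psi n k • X n k) - X n i0 := by
        simp_rw [smul_sub]
        rw [Finset.sum_sub_distrib, ← Finset.sum_smul, hpsi_sum n, one_smul]
      rw [← h2]
      have h3 : ∀ k, psi n k • (X n k - X n i0)
          = r ^ n • (psi n k • (X 0 k - X 0 i0)) := by
        intro k
        rw [diff n k i0, smul_comm]
      simp_rw [h3]
      rw [← Finset.smul_sum, smul_smul, mul_comm]
    rw [dist_comm, dist_eq_norm, key, norm_smul]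
    have hnorm : ‖∑ k, psi n k • (X 0 k - X 0 i0)‖
        ≤ ∑ k, ‖X 0 k - X 0 i0‖ := by
      calc ‖∑ k, psi n k • (X 0 k - X 0 i0)‖
          ≤ ∑ k, ‖psi n k • (X 0 k - X 0 i0)‖ := norm_sum_le _ _
        _ ≤ ∑ k, ‖X 0 k - X 0 i0‖ := by
            apply Finset.sum_le_sum
            intro k _
            rw [norm_smul, Real.norm_eq_abs, abs_of_nonneg (hpsi_nonneg n k)]
            exact mul_le_of_le_one_left (norm_nonneg _) (hpsi_le1 n k)
    have habs : ‖(lam * h) * r ^ n‖ = (lam * h) * r ^ n := by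
      rw [Real.norm_eq_abs, abs_of_nonneg]
      positivity
    rw [habs, hC_def]
    calc (lam * h) * r ^ n * ‖∑ k, psi n k • (X 0 k - X 0 i0)‖
        ≤ (lam * h) * r ^ n * ∑ k, ‖X 0 k - X 0 i0‖ := by
          apply mul_le_mul_of_nonneg_left hnorm
          positivity
      _ = (lam * h) * (∑ k, ‖X 0 k - X 0 i0‖) * r ^ n := by ring
  have hcauchy : CauchySeq (fun n => X n i0) :=
    cauchySeq_of_le_geometric r C hr1 hincr
  obtain ⟨Xinf, hXinf⟩ := cauchySeq_tendsto_of_complete hcauchy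
  refine ⟨Xinf, fun i => ?_⟩
  have hrepr : ∀ n, X n i = X n i0 + r ^ n • (X 0 i - X 0 i0) := by
    intro n
    have := diff n i i0
    rw [← this]
    abel
  have hr_tend : Tendsto (fun n : ℕ => r ^ n) atTop (nhds 0) :=
    tendsto_pow_atTop_nhds_zero_of_lt_one (le_of_lt hr0) hr1
  have hsmul : Tendsto (fun n : ℕ => r ^ n • (X 0 i - X 0 i0)) atTop
      (nhds (0 : EuclideanSpace ℝ (Fin d))) := by
    have := hr_tend.smul_const (X 0 i - X 0 i0)
    simpa using this
  have := hXinf.add hsmul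
  simp only [add_zero] at this
  exact this.congr (fun n => (hrepr n).symm)
end

section
/- Let $Z_0, Z_1, \dots$ be i.i.d. standard normal variables, $\lambda, \sigma, h > 0$ with $2\lambda > \sigma^2$ and $0 < h < (2\lambda - \sigma^2)/\lambda^2$, and set $m := 2\lambda - \lambda^2 h - \sigma^2 > 0$. For the recursion $D_{n+1} = (1 - \lambda h + \sigma \sqrt{h} Z_n) D_n$ with $D_0$ square-integrable and independent of $(Z_n)$, one has $\mathbb{E}|D_n|^2 = (1 - hm)^n \mathbb{E}|D_0|^2 \le e^{-mnh} \mathbb{E}|D_0|^2$. -/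
/-!
Unrolling the recursion gives `D n ^ 2 = D 0 ^ 2 * ∏ k < n, (a + b Z k) ^ 2` with
`a = 1 - λh` and `b = σ√h`. Since `D 0` is independent of the `Z k`, and the `Z k` are
independent of each other, the expectation factorizes into `𝔼[D 0 ^ 2]` times `n` copies of the
Gaussian second moment `𝔼[(a + b Z) ^ 2] = a ^ 2 + b ^ 2 = 1 - hm`. The exponential bound is then
`1 - x ≤ exp (-x)`, raised to the `n`-th power, which is legitimate because `1 - hm ≥ 0`.
-/

open MeasureTheory ProbabilityTheory Real Finset
open scoped NNReal

lemma integral_sq_gaussianReal (μ : ℝ) (v : ℝ≥0) :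
    ∫ x, x ^ 2 ∂gaussianReal μ v = μ ^ 2 + v := by
  have h := variance_eq_sub (memLp_id_gaussianReal (μ := μ) (v := v) 2)
  simp only [Pi.pow_apply, id_eq] at h
  rw [variance_id_gaussianReal, integral_id_gaussianReal] at h
  linarith

lemma integral_affine_sq_gaussianReal (μ : ℝ) (v : ℝ≥0) (a b : ℝ) :
    ∫ x, (a + b * x) ^ 2 ∂gaussianReal μ v = (a + b * μ) ^ 2 + b ^ 2 * v := by
  have h1 : Integrable (fun x ↦ 2 * a * b * x) (gaussianReal μ v) :=
    ((memLp_id_gaussianReal 1).integrable le_rfl).const_mul _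
  have h2 : Integrable (fun x ↦ b ^ 2 * x ^ 2) (gaussianReal μ v) :=
    (memLp_id_gaussianReal 2).integrable_sq.const_mul _
  have h12 : Integrable (fun x ↦ 2 * a * b * x + b ^ 2 * x ^ 2) (gaussianReal μ v) := h1.add h2
  calc ∫ x, (a + b * x) ^ 2 ∂gaussianReal μ v
      = ∫ x, a ^ 2 + (2 * a * b * x + b ^ 2 * x ^ 2) ∂gaussianReal μ v := by
        congr with x; ring
    _ = a ^ 2 + 2 * a * b * μ + b ^ 2 * (μ ^ 2 + v) := by
        rw [integral_add (integrable_const _) h12, integral_const, probReal_univ, one_smul,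
          integral_add h1 h2, integral_const_mul, integral_const_mul, integral_sq_gaussianReal,
          integral_id_gaussianReal]
        ring
    _ = (a + b * μ) ^ 2 + b ^ 2 * v := by ring

lemma eq_prod_range_mul_of_succ_eq_mul {M : Type*} [CommMonoid M] {x c : ℕ → M}
    (h : ∀ n, x (n + 1) = c n * x n) (n : ℕ) : x n = (∏ k ∈ range n, c k) * x 0 := by
  induction n with
  | zero => simp
  | succ n ih => rw [h, ih, prod_range_succ, mul_assoc, mul_left_comm]

section MultiplicativeRecursion

variable {Ω 𝓧 : Type*} [MeasurableSpace Ω] [MeasurableSpace 𝓧] {P : Measure Ω}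
  {Z : ℕ → Ω → 𝓧}

lemma ProbabilityTheory.iIndepFun.integral_prod_range_comp_eq_pow (hZ : iIndepFun Z P)
    (hZmeas : ∀ n, Measurable (Z n)) {g : 𝓧 → ℝ} (hg : Measurable g) {c : ℝ}
    (hc : ∀ n, ∫ ω, g (Z n ω) ∂P = c) (N : ℕ) :
    ∫ ω, ∏ k ∈ range N, g (Z k ω) ∂P = c ^ N := by
  have h := (hZ.precomp (Fin.val_injective (n := N))).integral_fun_prod_comp (f := fun _ ↦ g)
    (fun i ↦ (hZmeas i).aemeasurable) (fun _ ↦ hg.aestronglyMeasurable)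
  simp only [hc, prod_const, card_univ, Fintype.card_fin] at h
  rw [← h]
  congr with ω
  exact (Fin.prod_univ_eq_prod_range (fun k ↦ g (Z k ω)) N).symm

lemma integral_eq_pow_mul_of_succ_eq_mul (hZ : iIndepFun Z P) (hZmeas : ∀ n, Measurable (Z n))
    {φ : 𝓧 → ℝ} (hφ : Measurable φ) {c : ℝ} (hc : ∀ n, ∫ ω, φ (Z n ω) ∂P = c)
    {D : ℕ → Ω → ℝ} (hD0 : AEStronglyMeasurable (D 0) P)
    (hindep : IndepFun (D 0) (fun ω n ↦ Z n ω) P)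
    (hrec : ∀ n ω, D (n + 1) ω = φ (Z n ω) * D n ω) (n : ℕ) :
    ∫ ω, D n ω ∂P = c ^ n * ∫ ω, D 0 ω ∂P := by
  have hprod : Measurable fun y : ℕ → 𝓧 ↦ ∏ k ∈ range n, φ (y k) := by fun_prop
  have hD : D n = (fun ω ↦ ∏ k ∈ range n, φ (Z k ω)) * D 0 :=
    funext fun ω ↦ eq_prod_range_mul_of_succ_eq_mul (x := (D · ω)) (hrec · ω) n
  have hindep' : IndepFun (fun ω ↦ ∏ k ∈ range n, φ (Z k ω)) (D 0) P :=
    (hindep.comp measurable_id hprod).symm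
  rw [hD, hindep'.integral_mul_eq_mul_integral
    (hprod.comp (measurable_pi_lambda _ hZmeas)).aestronglyMeasurable hD0,
    hZ.integral_prod_range_comp_eq_pow hZmeas hφ hc]

end MultiplicativeRecursion

theorem stmt_10_general {Ω : Type*} [MeasurableSpace Ω] (P : Measure Ω)
    [IsProbabilityMeasure P]
    (lam sigma h : ℝ) (hh : 0 < h)
    (m : ℝ) (hm : m = 2 * lam - lam ^ 2 * h - sigma ^ 2)
    (Z : ℕ → Ω → ℝ) (hZmeas : ∀ n, Measurable (Z n))
    (hZlaw : ∀ n, Measure.map (Z n) P = gaussianReal 0 1)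
    (hZindep : iIndepFun Z P)
    (D : ℕ → Ω → ℝ)
    (hD0meas : Measurable (D 0))
    (hindep : IndepFun (D 0) (fun ω n => Z n ω) P)
    (hrec : ∀ n ω,
      D (n + 1) ω = (1 - lam * h + sigma * Real.sqrt h * Z n ω) * D n ω) :
    ∀ n : ℕ,
      ∫ ω, (D n ω) ^ 2 ∂P = (1 - h * m) ^ n * ∫ ω, (D 0 ω) ^ 2 ∂P ∧
      ∫ ω, (D n ω) ^ 2 ∂P ≤ Real.exp (-(m * n * h)) * ∫ ω, (D 0 ω) ^ 2 ∂P := by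
  set φ : ℝ → ℝ := fun x ↦ (1 - lam * h + sigma * √h * x) ^ 2
  have hφ : Measurable φ := by fun_prop
  have hstep (n : ℕ) : ∫ ω, φ (Z n ω) ∂P = 1 - h * m := by
    rw [← integral_map (hZmeas n).aemeasurable hφ.aestronglyMeasurable, hZlaw,
      integral_affine_sq_gaussianReal, mul_pow, sq_sqrt hh.le, hm]
    push_cast
    ring
  have hfactor_nonneg : 0 ≤ 1 - h * m := hstep 0 ▸ integral_nonneg fun _ ↦ sq_nonneg _
  have hmean := integral_eq_pow_mul_of_succ_eq_mul hZindep hZmeas hφ hstep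
    (D := fun n ω ↦ D n ω ^ 2) (hD0meas.pow_const 2).aestronglyMeasurable
    (hindep.comp (measurable_id.pow_const 2) measurable_id)
    (fun n ω ↦ by simp only [hrec, mul_pow, φ])
  intro n
  rw [hmean n]
  refine ⟨rfl, mul_le_mul_of_nonneg_right ?_ (integral_nonneg fun _ ↦ sq_nonneg _)⟩
  calc (1 - h * m) ^ n ≤ exp (-(h * m)) ^ n :=
        pow_le_pow_left₀ hfactor_nonneg (one_sub_le_exp_neg _) n
    _ = exp (-(m * n * h)) := by rw [← exp_nat_mul]; ring_nf

theorem stmt_10 {Ω : Type*} [MeasurableSpace Ω] (P : Measure Ω)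
    [IsProbabilityMeasure P]
    (lam sigma h : ℝ) (hlam : 0 < lam) (hsigma : 0 < sigma) (hh : 0 < h)
    (hcond : sigma ^ 2 < 2 * lam) (hh' : h < (2 * lam - sigma ^ 2) / lam ^ 2)
    (m : ℝ) (hm : m = 2 * lam - lam ^ 2 * h - sigma ^ 2)
    (Z : ℕ → Ω → ℝ) (hZmeas : ∀ n, Measurable (Z n))
    (hZlaw : ∀ n, Measure.map (Z n) P = gaussianReal 0 1)
    (hZindep : iIndepFun Z P)
    (D : ℕ → Ω → ℝ)
    (hD0meas : Measurable (D 0))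
    (hD0sq : Integrable (fun ω => (D 0 ω) ^ 2) P)
    (hindep : IndepFun (D 0) (fun ω n => Z n ω) P)
    (hrec : ∀ n ω,
      D (n + 1) ω = (1 - lam * h + sigma * Real.sqrt h * Z n ω) * D n ω) :
    ∀ n : ℕ,
      ∫ ω, (D n ω) ^ 2 ∂P = (1 - h * m) ^ n * ∫ ω, (D 0 ω) ^ 2 ∂P ∧
      ∫ ω, (D n ω) ^ 2 ∂P ≤ Real.exp (-(m * n * h)) * ∫ ω, (D 0 ω) ^ 2 ∂P :=
  stmt_10_general P lam sigma h hh m hm Z hZmeas hZlaw hZindep D hD0meas hindep hrec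
end
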